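/- Let Ω ⊂ ℝⁿ be a bounded connected open set whose signed distance function d is C² on a neighborhood of ∂Ω, with b and σ bounded continuous and a := σσᵀ. Suppose x̲ ∈ ∂Ω and α̲ ∈ A are such that either σ(x̲,α̲)ᵀ Dd(x̲) ≠ 0, or b(x̲,α̲)·Dd(x̲) + tr(a(x̲,α̲)D²d(x̲)) < 0. Then there exist r > 0, k > 0, λ > 0 and μ > 0 such that the function W(x) := 1 − e^{−k(d(x) + λ|x − x̲|²)} satisfies: (i) W(x) ≥ 0 and F[W](x) > 0 for all x ∈ B(x̲,r) ∩ cl Ω; (ii) W(x̲) = 0; and (iii) W(x) ≥ μ for all x ∈ cl Ω with |x − x̲| = r. -/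

import Mathlib

open scoped InnerProductSpace Matrix
open Filter

noncomputable section

/-- The signed distance to the boundary of `Ω`:
`d(x) = dist(x, Ωᶜ) - dist(x, closure Ω)`. -/
def sdist {n : ℕ} (Ω : Set (EuclideanSpace ℝ (Fin n))) (x : EuclideanSpace ℝ (Fin n)) : ℝ :=
  Metric.infDist x Ωᶜ - Metric.infDist x (closure Ω)

/-- The distance to the topological boundary of `Ω`. -/
def bdist {n : ℕ} (Ω : Set (EuclideanSpace ℝ (Fin n))) (x : EuclideanSpace ℝ (Fin n)) : ℝ :=
  Metric.infDist x (frontier Ω)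

/-- The Frobenius (Euclidean) norm of a matrix. -/
def mnorm {n r : ℕ} (M : Matrix (Fin n) (Fin r) ℝ) : ℝ :=
  Real.sqrt (∑ i, ∑ j, M i j ^ 2)

/-- The quadratic form `v ↦ v ⬝ X v`. -/
def quadForm {n : ℕ} (X : Matrix (Fin n) (Fin n) ℝ) (v : EuclideanSpace ℝ (Fin n)) : ℝ :=
  ∑ i, ∑ j, X i j * v i * v j

/-- `Mᵀ v` as a vector in `ℝʳ` (used for `σ(x,α)ᵀ Dd(x)`). -/
def sigmaT {n r : ℕ} (M : Matrix (Fin n) (Fin r) ℝ) (v : EuclideanSpace ℝ (Fin n)) :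
    Fin r → ℝ :=
  Matrix.mulVec Mᵀ (fun i => v i)

/-- The second-order superjet of `u` at `x` relative to `S`. -/
def J2plus {n : ℕ} (S : Set (EuclideanSpace ℝ (Fin n))) (u : EuclideanSpace ℝ (Fin n) → ℝ)
    (x : EuclideanSpace ℝ (Fin n)) :
    Set (EuclideanSpace ℝ (Fin n) × Matrix (Fin n) (Fin n) ℝ) :=
  { pX | pX.2.IsSymm ∧ ∀ ε > (0 : ℝ), ∀ᶠ y in nhdsWithin x S,
      u y - u x - ⟪pX.1, y - x⟫_ℝ - (1 / 2) * quadForm pX.2 (y - x) ≤ ε * ‖y - x‖ ^ 2 }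

/-- The second-order subjet of `u` at `x` relative to `S`: `J^{2,-}u = -J^{2,+}(-u)`. -/
def J2minus {n : ℕ} (S : Set (EuclideanSpace ℝ (Fin n))) (u : EuclideanSpace ℝ (Fin n) → ℝ)
    (x : EuclideanSpace ℝ (Fin n)) :
    Set (EuclideanSpace ℝ (Fin n) × Matrix (Fin n) (Fin n) ℝ) :=
  { qZ | (-qZ.1, -qZ.2) ∈ J2plus S (fun y => -u y) x }

/-- The first-order superdifferential of `u` at `x` relative to `S`. -/
def D1plus {n : ℕ} (S : Set (EuclideanSpace ℝ (Fin n))) (u : EuclideanSpace ℝ (Fin n) → ℝ)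
    (x : EuclideanSpace ℝ (Fin n)) : Set (EuclideanSpace ℝ (Fin n)) :=
  { q | ∀ ε > (0 : ℝ), ∀ᶠ y in nhdsWithin x S, u y - u x - ⟪q, y - x⟫_ℝ ≤ ε * ‖y - x‖ }

/-- The Bellman operator `F(x,p,X) = sup_{α ∈ A} (-b(x,α)·p - tr(σσᵀ X))`. -/
def Fop {n m r : ℕ} (A : Set (Fin m → ℝ))
    (b : EuclideanSpace ℝ (Fin n) → (Fin m → ℝ) → EuclideanSpace ℝ (Fin n))
    (σ : EuclideanSpace ℝ (Fin n) → (Fin m → ℝ) → Matrix (Fin n) (Fin r) ℝ)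
    (x p : EuclideanSpace ℝ (Fin n)) (X : Matrix (Fin n) (Fin n) ℝ) : ℝ :=
  sSup ((fun α => -⟪b x α, p⟫_ℝ - Matrix.trace (σ x α * (σ x α)ᵀ * X)) '' A)

/-- The Hamiltonian `H(x,p,X) = sup_{α ∈ A} (-b(x,α)·p - tr(σσᵀ X) - l(x,α))`. -/
def Hop {n m r : ℕ} (A : Set (Fin m → ℝ))
    (b : EuclideanSpace ℝ (Fin n) → (Fin m → ℝ) → EuclideanSpace ℝ (Fin n))
    (σ : EuclideanSpace ℝ (Fin n) → (Fin m → ℝ) → Matrix (Fin n) (Fin r) ℝ)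
    (l : EuclideanSpace ℝ (Fin n) → (Fin m → ℝ) → ℝ)
    (x p : EuclideanSpace ℝ (Fin n)) (X : Matrix (Fin n) (Fin n) ℝ) : ℝ :=
  sSup ((fun α => -⟪b x α, p⟫_ℝ - Matrix.trace (σ x α * (σ x α)ᵀ * X) - l x α) '' A)

/-- The set of projections of `x` onto `∂Ω`. -/
def projSet {n : ℕ} (Ω : Set (EuclideanSpace ℝ (Fin n))) (x : EuclideanSpace ℝ (Fin n)) :
    Set (EuclideanSpace ℝ (Fin n)) :=
  { z | z ∈ frontier Ω ∧ dist x z = bdist Ω x }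

/-- The interior normal directions at a boundary point `z`. -/
def normalDirs {n : ℕ} (Ω : Set (EuclideanSpace ℝ (Fin n))) (z : EuclideanSpace ℝ (Fin n)) :
    Set (EuclideanSpace ℝ (Fin n)) :=
  { ν | ‖ν‖ = 1 ∧ ∃ x ∈ Ω, x = z + bdist Ω x • ν }

/-! With `φ(x) = d(x) + λ|x - x̲|²`, the operator applied to `W = 1 - e^{-kφ}` with the control
`α̲` equals `k e^{-kφ} (-b·Dφ - tr(a D²φ) + k |σᵀDφ|²)`. At `x̲` we have `Dφ = Dd` and
`D²φ = D²d + 2λI`, so the bracket is `-(b·Dd + tr(a D²d)) - 2λ tr a + k |σᵀDd|²`: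
if `σᵀDd ≠ 0` it is positive for large `k`, otherwise it is positive for small `λ`. By continuity
it stays positive on `B(x̲, r) ∩ cl Ω`, and the supremum over `A` (finite because `b` and `σ` are
bounded) is at least this value. Since `d ≥ 0` on `cl Ω`, `W ≥ 0` there and `W ≥ 1 - e^{-kλr²}`
on the sphere. -/

open Matrix

lemma mnorm_sq {n r : ℕ} (M : Matrix (Fin n) (Fin r) ℝ) :
    mnorm M ^ 2 = ∑ i, ∑ j, M i j ^ 2 :=
  Real.sq_sqrt (by positivity)

lemma sigmaT_apply {n r : ℕ} (M : Matrix (Fin n) (Fin r) ℝ) (v : EuclideanSpace ℝ (Fin n))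
    (j : Fin r) : sigmaT M v j = ∑ i, M i j * v i := by
  simp [sigmaT, mulVec, dotProduct]

lemma sum_sigmaT_sq_le {n r : ℕ} (M : Matrix (Fin n) (Fin r) ℝ) (v : EuclideanSpace ℝ (Fin n)) :
    ∑ j, sigmaT M v j ^ 2 ≤ mnorm M ^ 2 * ‖v‖ ^ 2 := by
  rw [mnorm_sq, EuclideanSpace.norm_sq_eq, Finset.sum_comm, Finset.sum_mul]
  refine Finset.sum_le_sum fun j _ => ?_
  simpa only [sigmaT_apply, Real.norm_eq_abs, sq_abs] using
    Finset.sum_mul_sq_le_sq_mul_sq _ (fun i => M i j) (fun i => v i)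

lemma sum_sq_row_le_mnorm_sq {n r : ℕ} (M : Matrix (Fin n) (Fin r) ℝ) (i : Fin n) :
    ∑ j, M i j ^ 2 ≤ mnorm M ^ 2 := by
  rw [mnorm_sq]
  exact Finset.single_le_sum (f := fun i => ∑ j, M i j ^ 2) (fun _ _ => by positivity)
    (Finset.mem_univ i)

lemma abs_mul_transpose_apply_le {n r : ℕ} (S : Matrix (Fin n) (Fin r) ℝ) (i j : Fin n) :
    |(S * Sᵀ) i j| ≤ mnorm S ^ 2 := by
  have hcs : ((S * Sᵀ) i j) ^ 2 ≤ (∑ k, S i k ^ 2) * ∑ k, S j k ^ 2 := by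
    simpa only [mul_apply, transpose_apply] using Finset.sum_mul_sq_le_sq_mul_sq _ _ _
  refine abs_le_of_sq_le_sq (hcs.trans ?_) (by positivity)
  rw [sq (mnorm S ^ 2)]
  exact mul_le_mul (sum_sq_row_le_mnorm_sq S i) (sum_sq_row_le_mnorm_sq S j) (by positivity)
    (by positivity)

lemma abs_trace_mul_transpose_mul_le {n r : ℕ} (S : Matrix (Fin n) (Fin r) ℝ)
    (M : Matrix (Fin n) (Fin n) ℝ) :
    |trace (S * Sᵀ * M)| ≤ mnorm S ^ 2 * ∑ i, ∑ j, |M i j| := by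
  calc |trace (S * Sᵀ * M)| = |∑ i, ∑ j, (S * Sᵀ) i j * M j i| := by
        simp only [trace, diag_apply, mul_apply]
    _ ≤ ∑ i, ∑ j, |(S * Sᵀ) i j| * |M j i| := by
        refine (Finset.abs_sum_le_sum_abs _ _).trans (Finset.sum_le_sum fun i _ => ?_)
        simpa only [abs_mul] using
          Finset.abs_sum_le_sum_abs (fun j => (S * Sᵀ) i j * M j i) Finset.univ
    _ ≤ ∑ i, ∑ j, mnorm S ^ 2 * |M j i| := by
        gcongr with i _ j _
        exact abs_mul_transpose_apply_le S i j
    _ = mnorm S ^ 2 * ∑ i, ∑ j, |M i j| := by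
        simp only [← Finset.mul_sum]
        rw [Finset.sum_comm]

lemma trace_mul_transpose_nonneg {n r : ℕ} (S : Matrix (Fin n) (Fin r) ℝ) :
    0 ≤ trace (S * Sᵀ) := by
  simpa [conjTranspose_eq_transpose_of_trivial] using
    (posSemidef_self_mul_conjTranspose S).trace_nonneg

@[fun_prop]
lemma continuous_sdist {n : ℕ} (Ω : Set (EuclideanSpace ℝ (Fin n))) : Continuous (sdist Ω) :=
  (Metric.continuous_infDist_pt _).sub (Metric.continuous_infDist_pt _)

lemma sdist_nonneg_of_mem_closure {n : ℕ} {Ω : Set (EuclideanSpace ℝ (Fin n))}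
    {x : EuclideanSpace ℝ (Fin n)} (hx : x ∈ closure Ω) : 0 ≤ sdist Ω x := by
  rw [sdist, Metric.infDist_zero_of_mem hx, sub_zero]
  exact Metric.infDist_nonneg

lemma sdist_eq_zero_of_mem_frontier {n : ℕ} {Ω : Set (EuclideanSpace ℝ (Fin n))}
    {x : EuclideanSpace ℝ (Fin n)} (hx : x ∈ frontier Ω) : sdist Ω x = 0 := by
  rw [frontier_eq_closure_inter_closure] at hx
  rw [sdist, Metric.infDist_zero_of_mem_closure hx.2, Metric.infDist_zero_of_mem hx.1, sub_zero]

/-- For `W = 1 - e^{-kφ}` one has `DW = k e^{-kφ} Dφ` and `D²W = k e^{-kφ} (D²φ - k Dφ ⊗ Dφ)`, so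
`-p·DW - tr(SSᵀ D²W) = e^{-kφ} · barrierGen k p S Dφ D²φ`. -/
def barrierGen {n r : ℕ} (k : ℝ) (p : EuclideanSpace ℝ (Fin n)) (S : Matrix (Fin n) (Fin r) ℝ)
    (v : EuclideanSpace ℝ (Fin n)) (M : Matrix (Fin n) (Fin n) ℝ) : ℝ :=
  -(k * ⟪p, v⟫_ℝ) - k * trace (S * Sᵀ * M) + k ^ 2 * ∑ i, sigmaT S v i ^ 2

section barrierGen

variable {n r : ℕ}

lemma continuous_barrierGen (k : ℝ) :
    Continuous fun q : EuclideanSpace ℝ (Fin n) × Matrix (Fin n) (Fin r) ℝ ×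
        EuclideanSpace ℝ (Fin n) × Matrix (Fin n) (Fin n) ℝ =>
      barrierGen k q.1 q.2.1 q.2.2.1 q.2.2.2 := by
  have htrace : Continuous fun q : EuclideanSpace ℝ (Fin n) × Matrix (Fin n) (Fin r) ℝ ×
      EuclideanSpace ℝ (Fin n) × Matrix (Fin n) (Fin n) ℝ => trace (q.2.1 * q.2.1ᵀ * q.2.2.2) :=
    ((continuous_snd.fst.matrix_mul continuous_snd.fst.matrix_transpose).matrix_mul
      continuous_snd.snd.snd).matrix_trace
  unfold barrierGen sigmaT
  fun_prop

lemma barrierGen_add_smul_one (k c : ℝ) (p : EuclideanSpace ℝ (Fin n))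
    (S : Matrix (Fin n) (Fin r) ℝ) (v : EuclideanSpace ℝ (Fin n)) (M : Matrix (Fin n) (Fin n) ℝ) :
    barrierGen k p S v (M + c • 1) = barrierGen k p S v M - k * c * trace (S * Sᵀ) := by
  simp only [barrierGen, Matrix.mul_add, Matrix.mul_smul, Matrix.mul_one, trace_add, trace_smul,
    smul_eq_mul]
  ring

lemma exists_barrierGen_pos {p : EuclideanSpace ℝ (Fin n)} {S : Matrix (Fin n) (Fin r) ℝ}
    {v : EuclideanSpace ℝ (Fin n)} {M : Matrix (Fin n) (Fin n) ℝ}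
    (h : sigmaT S v ≠ 0 ∨ ⟪p, v⟫_ℝ + trace (S * Sᵀ * M) < 0) :
    ∃ k > (0 : ℝ), ∃ lam > (0 : ℝ), 0 < barrierGen k p S v (M + (2 * lam) • 1) := by
  set c := -(⟪p, v⟫_ℝ + trace (S * Sᵀ * M))
  set q := ∑ i, sigmaT S v i ^ 2
  set T := trace (S * Sᵀ)
  have hT : 0 ≤ T := trace_mul_transpose_nonneg S
  have hq : 0 ≤ q := by positivity
  suffices ∃ k > (0 : ℝ), ∃ lam > (0 : ℝ), 0 < c - 2 * lam * T + k * q by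
    obtain ⟨k, hk, lam, hlam, hpos⟩ := this
    refine ⟨k, hk, lam, hlam, ?_⟩
    have : barrierGen k p S v (M + (2 * lam) • 1) = k * (c - 2 * lam * T + k * q) := by
      rw [barrierGen_add_smul_one, barrierGen]
      ring
    rw [this]
    positivity
  rcases h with hσv | hc
  · have hq : 0 < q := by
      obtain ⟨j, hj⟩ := Function.ne_iff.mp hσv
      exact Finset.sum_pos' (fun i _ => sq_nonneg _) ⟨j, Finset.mem_univ j, sq_pos_iff.mpr hj⟩
    refine ⟨(|c - 2 * T| + 1) / q, by positivity, 1, one_pos, ?_⟩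
    rw [div_mul_cancel₀ _ hq.ne']
    linarith [neg_abs_le (c - 2 * T)]
  · refine ⟨1, one_pos, c / (4 * (T + 1)), div_pos (by linarith) (by positivity), ?_⟩
    have : 2 * (c / (4 * (T + 1))) * T ≤ c / 2 := by
      rw [show 2 * (c / (4 * (T + 1))) * T = c / 2 * (T / (T + 1)) by field_simp; ring]
      exact mul_le_of_le_one_right (by linarith) (div_le_one_of_le₀ (by linarith) (by linarith))
    linarith

lemma barrierGen_le {k Cb Cσ : ℝ} (hk : 0 ≤ k) {p : EuclideanSpace ℝ (Fin n)}
    {S : Matrix (Fin n) (Fin r) ℝ} (hp : ‖p‖ ≤ Cb) (hS : mnorm S ≤ Cσ)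
    (v : EuclideanSpace ℝ (Fin n)) (M : Matrix (Fin n) (Fin n) ℝ) :
    barrierGen k p S v M ≤
      k * (Cb * ‖v‖) + k * (Cσ ^ 2 * ∑ i, ∑ j, |M i j|) + k ^ 2 * (Cσ ^ 2 * ‖v‖ ^ 2) := by
  have hS2 : mnorm S ^ 2 ≤ Cσ ^ 2 := pow_le_pow_left₀ (Real.sqrt_nonneg _) hS 2
  have hdrift : -⟪p, v⟫_ℝ ≤ Cb * ‖v‖ :=
    (neg_le_abs _).trans ((abs_real_inner_le_norm p v).trans (by gcongr))
  have hdiff : -trace (S * Sᵀ * M) ≤ Cσ ^ 2 * ∑ i, ∑ j, |M i j| :=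
    (neg_le_abs _).trans ((abs_trace_mul_transpose_mul_le S M).trans (by gcongr))
  have hnoise : ∑ i, sigmaT S v i ^ 2 ≤ Cσ ^ 2 * ‖v‖ ^ 2 :=
    (sum_sigmaT_sq_le S v).trans (by gcongr)
  rw [barrierGen]
  have := mul_le_mul_of_nonneg_left hdrift hk
  have := mul_le_mul_of_nonneg_left hdiff hk
  have := mul_le_mul_of_nonneg_left hnoise (sq_nonneg k)
  linarith

end barrierGen

lemma exists_ball_inter_pos_of_continuousWithinAt {X : Type*} [PseudoMetricSpace X] {f : X → ℝ}
    {s : Set X} {x₀ : X} (hf : ContinuousWithinAt f s x₀) (hpos : 0 < f x₀) :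
    ∃ rad > (0 : ℝ), ∀ x ∈ Metric.ball x₀ rad ∩ s, 0 < f x :=
  Metric.mem_nhdsWithin_iff.mp (hf (Ioi_mem_nhds hpos))

theorem statement_19_general
    {n m r : ℕ} (Ω : Set (EuclideanSpace ℝ (Fin n)))
    (A : Set (Fin m → ℝ))
    (b : EuclideanSpace ℝ (Fin n) → (Fin m → ℝ) → EuclideanSpace ℝ (Fin n))
    (σ : EuclideanSpace ℝ (Fin n) → (Fin m → ℝ) → Matrix (Fin n) (Fin r) ℝ)
    (hbBdd : ∃ C, ∀ x ∈ closure Ω, ∀ α ∈ A, ‖b x α‖ ≤ C)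
    (hσBdd : ∃ C, ∀ x ∈ closure Ω, ∀ α ∈ A, mnorm (σ x α) ≤ C)
    (hbCont : ContinuousOn (fun q : EuclideanSpace ℝ (Fin n) × (Fin m → ℝ) => b q.1 q.2)
      (closure Ω ×ˢ A))
    (hσCont : ContinuousOn (fun q : EuclideanSpace ℝ (Fin n) × (Fin m → ℝ) => σ q.1 q.2)
      (closure Ω ×ˢ A))
    (δ₀ : ℝ) (hδ₀ : 0 < δ₀)
    (Dd : EuclideanSpace ℝ (Fin n) → EuclideanSpace ℝ (Fin n))
    (D2d : EuclideanSpace ℝ (Fin n) → Matrix (Fin n) (Fin n) ℝ)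
    (hD2d : ∀ x, |sdist Ω x| < δ₀ →
      HasFDerivAt Dd (LinearMap.toContinuousLinearMap (Matrix.toEuclideanLin (D2d x))) x)
    (hD2dCont : ContinuousOn D2d {x | |sdist Ω x| < δ₀})
    (x₀ : EuclideanSpace ℝ (Fin n)) (hx₀ : x₀ ∈ frontier Ω)
    (α₀ : Fin m → ℝ) (hα₀ : α₀ ∈ A)
    (hrel : sigmaT (σ x₀ α₀) (Dd x₀) ≠ 0 ∨
      ⟪b x₀ α₀, Dd x₀⟫_ℝ + Matrix.trace (σ x₀ α₀ * (σ x₀ α₀)ᵀ * D2d x₀) < 0) :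
    ∃ rad > (0 : ℝ), ∃ k > (0 : ℝ), ∃ lam > (0 : ℝ), ∃ μ > (0 : ℝ),
      (∀ x ∈ Metric.ball x₀ rad ∩ closure Ω,
        0 ≤ 1 - Real.exp (-(k * (sdist Ω x + lam * ‖x - x₀‖ ^ 2))) ∧
        0 < sSup ((fun α =>
          Real.exp (-(k * (sdist Ω x + lam * ‖x - x₀‖ ^ 2))) *
            (-(k * ⟪b x α, Dd x + (2 * lam) • (x - x₀)⟫_ℝ)
              - k * Matrix.trace (σ x α * (σ x α)ᵀ *
                  (D2d x + (2 * lam) • (1 : Matrix (Fin n) (Fin n) ℝ)))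
              + k ^ 2 * ∑ i, sigmaT (σ x α) (Dd x + (2 * lam) • (x - x₀)) i ^ 2)) '' A)) ∧
      1 - Real.exp (-(k * (sdist Ω x₀ + lam * ‖x₀ - x₀‖ ^ 2))) = 0 ∧
      (∀ x ∈ closure Ω, ‖x - x₀‖ = rad →
        μ ≤ 1 - Real.exp (-(k * (sdist Ω x + lam * ‖x - x₀‖ ^ 2)))) := by
  obtain ⟨Cb, hCb⟩ := hbBdd
  obtain ⟨Cσ, hCσ⟩ := hσBdd
  have hd₀ : sdist Ω x₀ = 0 := sdist_eq_zero_of_mem_frontier hx₀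
  have hx₀Ω : x₀ ∈ closure Ω := frontier_subset_closure hx₀
  obtain ⟨k, hk, lam, hlam, hpos⟩ := exists_barrierGen_pos hrel
  set v : EuclideanSpace ℝ (Fin n) → EuclideanSpace ℝ (Fin n) :=
    fun x => Dd x + (2 * lam) • (x - x₀)
  set M : EuclideanSpace ℝ (Fin n) → Matrix (Fin n) (Fin n) ℝ := fun x => D2d x + (2 * lam) • 1
  set G : EuclideanSpace ℝ (Fin n) → (Fin m → ℝ) → ℝ :=
    fun x α => Real.exp (-(k * (sdist Ω x + lam * ‖x - x₀‖ ^ 2))) *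
      barrierGen k (b x α) (σ x α) (v x) (M x)
  have hGcont : ContinuousWithinAt (G · α₀) (closure Ω) x₀ := by
    have hx₀near : |sdist Ω x₀| < δ₀ := by simpa [hd₀] using hδ₀
    have hnear : {x | |sdist Ω x| < δ₀} ∈ nhds x₀ :=
      (isOpen_lt (continuous_sdist Ω).abs continuous_const).mem_nhds hx₀near
    have hv : ContinuousAt v x₀ := (hD2d x₀ hx₀near).continuousAt.add (by fun_prop)
    have hM : ContinuousAt M x₀ := (hD2dCont.continuousAt hnear).add continuousAt_const
    have hE : Continuous fun x => Real.exp (-(k * (sdist Ω x + lam * ‖x - x₀‖ ^ 2))) := by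
      fun_prop
    have hb : ContinuousWithinAt (b · α₀) (closure Ω) x₀ :=
      hbCont.uncurry_right (f := b) α₀ hα₀ x₀ hx₀Ω
    have hσ : ContinuousWithinAt (σ · α₀) (closure Ω) x₀ :=
      hσCont.uncurry_right (f := σ) α₀ hα₀ x₀ hx₀Ω
    have hq := hb.prodMk (hσ.prodMk (hv.continuousWithinAt.prodMk hM.continuousWithinAt))
    have hgen := (continuous_barrierGen (r := r) k).continuousAt.comp_continuousWithinAt hq
    exact hE.continuousWithinAt.mul hgen
  have hG₀ : 0 < G x₀ α₀ := by simpa [G, v, M, hd₀] using hpos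
  obtain ⟨rad, hrad, hG⟩ := exists_ball_inter_pos_of_continuousWithinAt hGcont hG₀
  have hbdd : ∀ x ∈ closure Ω, BddAbove (G x '' A) := fun x hx => ⟨_, by
    rintro _ ⟨α, hα, rfl⟩
    exact mul_le_mul_of_nonneg_left (barrierGen_le hk.le (hCb x hx α hα) (hCσ x hx α hα) _ _)
      (Real.exp_nonneg _)⟩
  refine ⟨rad, hrad, k, hk, lam, hlam, 1 - Real.exp (-(k * (lam * rad ^ 2))), ?_,
    fun x hx => ⟨?_, lt_csSup_of_lt (hbdd x hx.2) (Set.mem_image_of_mem _ hα₀) (hG x hx)⟩,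
    by simp [hd₀], fun x hx hxr => ?_⟩
  · simpa using Real.exp_lt_one_iff.mpr (neg_lt_zero.mpr (by positivity))
  · have := sdist_nonneg_of_mem_closure hx.2
    simpa using Real.exp_le_one_iff.mpr (neg_nonpos.mpr (by positivity))
  · have := sdist_nonneg_of_mem_closure hx
    rw [hxr]
    gcongr
    linarith

theorem statement_19
    {n m r : ℕ} (Ω : Set (EuclideanSpace ℝ (Fin n)))
    (hΩo : IsOpen Ω) (hΩconn : IsConnected Ω) (hΩbdd : Bornology.IsBounded Ω)
    (A : Set (Fin m → ℝ)) (hA : IsClosed A) (hAne : A.Nonempty)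
    (b : EuclideanSpace ℝ (Fin n) → (Fin m → ℝ) → EuclideanSpace ℝ (Fin n))
    (σ : EuclideanSpace ℝ (Fin n) → (Fin m → ℝ) → Matrix (Fin n) (Fin r) ℝ)
    (hbBdd : ∃ C, ∀ x ∈ closure Ω, ∀ α ∈ A, ‖b x α‖ ≤ C)
    (hσBdd : ∃ C, ∀ x ∈ closure Ω, ∀ α ∈ A, mnorm (σ x α) ≤ C)
    (hbCont : ContinuousOn (fun q : EuclideanSpace ℝ (Fin n) × (Fin m → ℝ) => b q.1 q.2)
      (closure Ω ×ˢ A))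
    (hσCont : ContinuousOn (fun q : EuclideanSpace ℝ (Fin n) × (Fin m → ℝ) => σ q.1 q.2)
      (closure Ω ×ˢ A))
    (δ₀ : ℝ) (hδ₀ : 0 < δ₀)
    (Dd : EuclideanSpace ℝ (Fin n) → EuclideanSpace ℝ (Fin n))
    (D2d : EuclideanSpace ℝ (Fin n) → Matrix (Fin n) (Fin n) ℝ)
    (hDd : ∀ x, |sdist Ω x| < δ₀ → HasGradientAt (sdist Ω) (Dd x) x)
    (hDdnorm : ∀ x, |sdist Ω x| < δ₀ → ‖Dd x‖ = 1)
    (hD2d : ∀ x, |sdist Ω x| < δ₀ →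
      HasFDerivAt Dd (LinearMap.toContinuousLinearMap (Matrix.toEuclideanLin (D2d x))) x)
    (hD2dCont : ContinuousOn D2d {x | |sdist Ω x| < δ₀})
    (x₀ : EuclideanSpace ℝ (Fin n)) (hx₀ : x₀ ∈ frontier Ω)
    (α₀ : Fin m → ℝ) (hα₀ : α₀ ∈ A)
    (hrel : sigmaT (σ x₀ α₀) (Dd x₀) ≠ 0 ∨
      ⟪b x₀ α₀, Dd x₀⟫_ℝ + Matrix.trace (σ x₀ α₀ * (σ x₀ α₀)ᵀ * D2d x₀) < 0) :
    ∃ rad > (0 : ℝ), ∃ k > (0 : ℝ), ∃ lam > (0 : ℝ), ∃ μ > (0 : ℝ),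
      (∀ x ∈ Metric.ball x₀ rad ∩ closure Ω,
        0 ≤ 1 - Real.exp (-(k * (sdist Ω x + lam * ‖x - x₀‖ ^ 2))) ∧
        0 < sSup ((fun α =>
          Real.exp (-(k * (sdist Ω x + lam * ‖x - x₀‖ ^ 2))) *
            (-(k * ⟪b x α, Dd x + (2 * lam) • (x - x₀)⟫_ℝ)
              - k * Matrix.trace (σ x α * (σ x α)ᵀ *
                  (D2d x + (2 * lam) • (1 : Matrix (Fin n) (Fin n) ℝ)))
              + k ^ 2 * ∑ i, sigmaT (σ x α) (Dd x + (2 * lam) • (x - x₀)) i ^ 2)) '' A)) ∧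
      1 - Real.exp (-(k * (sdist Ω x₀ + lam * ‖x₀ - x₀‖ ^ 2))) = 0 ∧
      (∀ x ∈ closure Ω, ‖x - x₀‖ = rad →
        μ ≤ 1 - Real.exp (-(k * (sdist Ω x + lam * ‖x - x₀‖ ^ 2)))) :=
  statement_19_general Ω A b σ hbBdd hσBdd hbCont hσCont δ₀ hδ₀ Dd D2d hD2d hD2dCont x₀ hx₀ α₀ hα₀
    hrel
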